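/- Let μ ∈ ℝ and σ > 0. Then the unconditional error E(μ, σ) = ∫₀¹ Φ(−|μ − log u| / σ) du admits the closed form: if μ ≥ 0, E(μ, σ) = Φ(−μ/σ) − e^{μ + σ²/2} Φ(−(μ + σ²)/σ); and if μ < 0, E(μ, σ) = Φ(μ/σ) + e^{μ + σ²/2} [Φ(−(μ + σ²)/σ) − 2Φ(−σ)]. -/

import Mathlib

open MeasureTheory

/-- The standard normal cumulative distribution function. -/
noncomputable def Phi (x : ℝ) : ℝ :=
  ∫ t in Set.Iic x, Real.exp (-t^2/2) / Real.sqrt (2 * Real.pi)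


open Real Filter Set

noncomputable def phi (x : ℝ) : ℝ := Real.exp (-x^2/2) / Real.sqrt (2 * Real.pi)

lemma phi_cont : Continuous phi := by
  unfold phi
  continuity

lemma phi_nonneg (x : ℝ) : 0 ≤ phi x :=
  div_nonneg (Real.exp_nonneg _) (Real.sqrt_nonneg _)

lemma phi_integrable : Integrable phi := by
  have h : Integrable (fun x : ℝ => Real.exp (-(1/2 : ℝ) * x ^ 2)) := integrable_exp_neg_mul_sq (by norm_num)
  have : phi = fun x => Real.exp (-(1/2 : ℝ) * x ^ 2) * (Real.sqrt (2 * Real.pi))⁻¹ := by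
    ext x; unfold phi; rw [div_eq_mul_inv]; ring_nf
  rw [this]
  exact h.mul_const _

lemma integral_phi : ∫ x, phi x = 1 := by
  unfold phi
  rw [integral_div]
  have : (fun x : ℝ => Real.exp (-x^2/2)) = fun x : ℝ => Real.exp (-(1/2 : ℝ) * x ^ 2) := by
    ext x; ring_nf
  rw [this, integral_gaussian]
  rw [div_eq_one_iff_eq (by positivity)]
  rw [show Real.pi / (1/2) = 2 * Real.pi by ring]

lemma Phi_eq (x : ℝ) : Phi x = ∫ t in Set.Iic x, phi t := rfl

lemma phi_even (x : ℝ) : phi (-x) = phi x := by unfold phi; ring_nf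

lemma hasDerivAt_Phi (x : ℝ) : HasDerivAt Phi (phi x) x := by
  have hint : ∀ a b : ℝ, IntervalIntegrable phi volume a b := fun a b =>
    phi_integrable.intervalIntegrable
  have heq : ∀ y : ℝ, Phi y = (∫ t in Set.Iic (0:ℝ), phi t) + ∫ t in (0:ℝ)..y, phi t := by
    intro y
    rw [Phi_eq, ← intervalIntegral.integral_Iic_sub_Iic (phi_integrable.integrableOn)
      (phi_integrable.integrableOn)]
    ring
  have h1 : HasDerivAt (fun y => (∫ t in Set.Iic (0:ℝ), phi t) + ∫ t in (0:ℝ)..y, phi t)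
      (phi x) x := by
    refine HasDerivAt.const_add _ ?_
    exact intervalIntegral.integral_hasDerivAt_right (hint 0 x)
      (phi_cont.aestronglyMeasurable.stronglyMeasurableAtFilter) phi_cont.continuousAt
  exact h1.congr_of_eventuallyEq (Filter.Eventually.of_forall heq)

lemma Phi_cont : Continuous Phi :=
  continuous_iff_continuousAt.2 fun x => (hasDerivAt_Phi x).continuousAt

lemma Phi_nonneg (x : ℝ) : 0 ≤ Phi x := by
  rw [Phi_eq]
  exact setIntegral_nonneg measurableSet_Iic fun t _ => phi_nonneg t

lemma Phi_le_one (x : ℝ) : Phi x ≤ 1 := by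
  rw [Phi_eq, ← integral_phi]
  exact setIntegral_le_integral phi_integrable (Filter.Eventually.of_forall phi_nonneg)

lemma Phi_tendsto_atBot : Tendsto Phi atBot (nhds 0) := by
  have heq : Phi = fun x => ∫ t, Set.indicator (Set.Iic x) phi t := by
    ext x; rw [integral_indicator measurableSet_Iic]; rfl
  rw [heq, show (0:ℝ) = ∫ _t : ℝ, (0:ℝ) by simp]
  refine tendsto_integral_filter_of_dominated_convergence phi ?_ ?_ phi_integrable ?_
  · filter_upwards with x using
      (phi_integrable.aestronglyMeasurable.indicator measurableSet_Iic)
  · filter_upwards with x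
    filter_upwards with t
    rw [Real.norm_eq_abs, abs_of_nonneg (Set.indicator_nonneg (fun s _ => phi_nonneg s) t)]
    exact Set.indicator_le_self' (fun s _ => phi_nonneg s) t
  · refine Filter.Eventually.of_forall fun t => ?_
    have : ∀ᶠ x in (atBot : Filter ℝ), Set.indicator (Set.Iic x) phi t = 0 := by
      filter_upwards [eventually_lt_atBot t] with x hx
      exact Set.indicator_of_notMem (by simpa using hx.not_ge) _
    exact Tendsto.congr' (this.mono fun x hx => hx.symm) tendsto_const_nhds

lemma key (μ σ t : ℝ) (hσ : σ ≠ 0) :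
    Real.exp (μ + σ^2/2) * phi ((t - μ - σ^2)/σ) = Real.exp t * phi ((t - μ)/σ) := by
  unfold phi
  have h : Real.exp (μ + σ^2/2) * Real.exp (-((t - μ - σ^2)/σ)^2/2)
      = Real.exp t * Real.exp (-((t - μ)/σ)^2/2) := by
    rw [← Real.exp_add, ← Real.exp_add]
    congr 1
    field_simp
    ring
  rw [← mul_div_assoc, ← mul_div_assoc, h]

lemma hasDerivAt_H (μ σ : ℝ) (hσ : 0 < σ) {u : ℝ} (hu : 0 < u) :
    HasDerivAt (fun u => u * Phi ((Real.log u - μ)/σ)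
        - Real.exp (μ + σ^2/2) * Phi ((Real.log u - μ - σ^2)/σ))
      (Phi ((Real.log u - μ)/σ)) u := by
  have hlog : HasDerivAt Real.log u⁻¹ u := Real.hasDerivAt_log hu.ne'
  have h1 : HasDerivAt (fun u => (Real.log u - μ)/σ) (u⁻¹/σ) u :=
    (hlog.sub_const μ).div_const σ
  have h2 : HasDerivAt (fun u => (Real.log u - μ - σ^2)/σ) (u⁻¹/σ) u :=
    ((hlog.sub_const μ).sub_const (σ^2)).div_const σ
  have hA := (hasDerivAt_Phi ((Real.log u - μ)/σ)).comp u h1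
  have hB := (hasDerivAt_Phi ((Real.log u - μ - σ^2)/σ)).comp u h2
  have h := ((hasDerivAt_id u).mul hA).sub (hB.const_mul (Real.exp (μ + σ^2/2)))
  convert h using 1
  · rfl
  · rfl
  · rfl
  simp only [Function.comp_apply]
  simp only [id_eq]
  have hkey := key μ σ (Real.log u) hσ.ne'
  rw [Real.exp_log hu] at hkey
  have hrw : Real.exp (μ + σ^2/2) * (phi ((Real.log u - μ - σ^2)/σ) * (u⁻¹/σ))
      = u * phi ((Real.log u - μ)/σ) * (u⁻¹/σ) := by rw [← mul_assoc, hkey]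
  rw [hrw]; ring

lemma hasDerivAt_G (μ σ : ℝ) (hσ : 0 < σ) {u : ℝ} (hu : 0 < u) :
    HasDerivAt (fun u => u * Phi ((μ - Real.log u)/σ)
        + Real.exp (μ + σ^2/2) * Phi ((Real.log u - μ - σ^2)/σ))
      (Phi ((μ - Real.log u)/σ)) u := by
  have hlog : HasDerivAt Real.log u⁻¹ u := Real.hasDerivAt_log hu.ne'
  have h1 : HasDerivAt (fun u => (μ - Real.log u)/σ) (-u⁻¹/σ) u := by
    have := ((hlog.const_sub μ)).div_const σ
    simpa using this
  have h2 : HasDerivAt (fun u => (Real.log u - μ - σ^2)/σ) (u⁻¹/σ) u :=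
    ((hlog.sub_const μ).sub_const (σ^2)).div_const σ
  have hA := (hasDerivAt_Phi ((μ - Real.log u)/σ)).comp u h1
  have hB := (hasDerivAt_Phi ((Real.log u - μ - σ^2)/σ)).comp u h2
  have h := ((hasDerivAt_id u).mul hA).add (hB.const_mul (Real.exp (μ + σ^2/2)))
  convert h using 1
  · rfl
  · rfl
  · rfl
  simp only [Function.comp_apply]
  simp only [id_eq]
  have hkey := key μ σ (Real.log u) hσ.ne'
  rw [Real.exp_log hu] at hkey
  have heven : phi ((μ - Real.log u)/σ) = phi ((Real.log u - μ)/σ) := by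
    rw [← phi_even ((Real.log u - μ)/σ)]; ring_nf
  have hrw : Real.exp (μ + σ^2/2) * (phi ((Real.log u - μ - σ^2)/σ) * (u⁻¹/σ))
      = u * phi ((Real.log u - μ)/σ) * (u⁻¹/σ) := by rw [← mul_assoc, hkey]
  rw [hrw, heven]; ring

lemma tendsto_arg_atBot (σ : ℝ) (hσ : 0 < σ) (c : ℝ) :
    Tendsto (fun u => (Real.log u - c)/σ) (nhdsWithin 0 (Set.Ioi 0)) atBot := by
  have h := (tendsto_atBot_add_const_right _ (-c)
    Real.tendsto_log_nhdsGT_zero).atBot_div_const hσ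
  refine h.congr fun u => ?_
  rw [sub_eq_add_neg]

lemma H_tendsto_zero (μ σ : ℝ) (hσ : 0 < σ) :
    Tendsto (fun u => u * Phi ((Real.log u - μ)/σ)
        - Real.exp (μ + σ^2/2) * Phi ((Real.log u - μ - σ^2)/σ))
      (nhdsWithin 0 (Set.Ioi 0)) (nhds 0) := by
  have t1 : Tendsto (fun u => Phi ((Real.log u - μ)/σ)) (nhdsWithin 0 (Set.Ioi 0)) (nhds 0) :=
    Phi_tendsto_atBot.comp (tendsto_arg_atBot σ hσ μ)
  have t2 : Tendsto (fun u => Phi ((Real.log u - μ - σ^2)/σ)) (nhdsWithin 0 (Set.Ioi 0)) (nhds 0) := by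
    have := Phi_tendsto_atBot.comp (tendsto_arg_atBot σ hσ (μ + σ^2))
    refine this.congr fun u => ?_
    simp only [Function.comp_apply, sub_add_eq_sub_sub]
  have tid : Tendsto (fun u : ℝ => u) (nhdsWithin 0 (Set.Ioi 0)) (nhds 0) :=
    tendsto_id.mono_left nhdsWithin_le_nhds
  have := (tid.mul t1).sub (t2.const_mul (Real.exp (μ + σ^2/2)))
  simpa using this

lemma intInt (μ σ : ℝ) (a b : ℝ) :
    IntervalIntegrable (fun u => Phi (-|μ - Real.log u| / σ)) volume a b := by
  rw [intervalIntegrable_iff]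
  haveI : IsFiniteMeasure (volume.restrict (Set.uIoc a b)) :=
    ⟨by rw [Measure.restrict_apply_univ, Set.uIoc, Real.volume_Ioc]; exact ENNReal.ofReal_lt_top⟩
  apply Integrable.mono' (integrable_const (1:ℝ))
  · exact ((Phi_cont.measurable.comp
      (((measurable_const.sub Real.measurable_log).abs.neg).div_const σ))).aestronglyMeasurable
  · filter_upwards with u
    rw [Real.norm_eq_abs, abs_of_nonneg (Phi_nonneg _)]
    exact Phi_le_one _


/-- Closed form for the unconditional error
`E(μ,σ) = ∫₀¹ Φ(−|μ − log u|/σ) du`. -/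
theorem unconditional_error_closed_form (μ σ : ℝ) (hσ : 0 < σ) :
    (0 ≤ μ →
      (∫ u in (0:ℝ)..1, Phi (-|μ - Real.log u| / σ))
        = Phi (-μ/σ) - Real.exp (μ + σ^2/2) * Phi (-(μ + σ^2)/σ)) ∧
    (μ < 0 →
      (∫ u in (0:ℝ)..1, Phi (-|μ - Real.log u| / σ))
        = Phi (μ/σ)
          + Real.exp (μ + σ^2/2) * (Phi (-(μ + σ^2)/σ) - 2 * Phi (-σ))) := by
  have hσ' : σ ≠ 0 := hσ.ne'
  constructor
  · intro hμ
    have heq : ∫ u in (0:ℝ)..1, Phi (-|μ - Real.log u| / σ)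
        = ((1:ℝ) * Phi ((Real.log 1 - μ)/σ)
            - Real.exp (μ + σ^2/2) * Phi ((Real.log 1 - μ - σ^2)/σ)) - 0 := by
      apply intervalIntegral.integral_eq_sub_of_hasDerivAt_of_tendsto one_pos
      · intro x hx
        have hx0 : 0 < x := hx.1
        have hlt : Real.log x < 0 := Real.log_neg hx0 hx.2
        have habs : -|μ - Real.log x| / σ = (Real.log x - μ)/σ := by
          rw [abs_of_pos (by linarith : (0:ℝ) < μ - Real.log x)]; ring
        rw [habs]
        exact hasDerivAt_H μ σ hσ hx0
      · exact intInt μ σ 0 1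
      · exact H_tendsto_zero μ σ hσ
      · exact ((hasDerivAt_H μ σ hσ one_pos).continuousAt.tendsto).mono_left nhdsWithin_le_nhds
    rw [heq, Real.log_one]
    have e1 : ((0:ℝ) - μ)/σ = -μ/σ := by ring
    have e2 : ((0:ℝ) - μ - σ^2)/σ = -(μ + σ^2)/σ := by ring
    rw [e1, e2]; ring
  · intro hμ
    have hc0 : 0 < Real.exp μ := Real.exp_pos μ
    have hc1 : Real.exp μ < 1 := Real.exp_lt_one_iff.mpr hμ
    have hlogc : Real.log (Real.exp μ) = μ := Real.log_exp μ
    rw [← intervalIntegral.integral_add_adjacent_intervals (intInt μ σ 0 (Real.exp μ))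
      (intInt μ σ (Real.exp μ) 1)]
    have h1 : ∫ u in (0:ℝ)..(Real.exp μ), Phi (-|μ - Real.log u| / σ)
        = (Real.exp μ * Phi ((Real.log (Real.exp μ) - μ)/σ)
            - Real.exp (μ + σ^2/2) * Phi ((Real.log (Real.exp μ) - μ - σ^2)/σ)) - 0 := by
      apply intervalIntegral.integral_eq_sub_of_hasDerivAt_of_tendsto hc0
      · intro x hx
        have hx0 : 0 < x := hx.1
        have hlt : Real.log x < μ := by
          have := Real.log_lt_log hx0 hx.2
          rwa [hlogc] at this
        have habs : -|μ - Real.log x| / σ = (Real.log x - μ)/σ := by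
          rw [abs_of_pos (by linarith : (0:ℝ) < μ - Real.log x)]; ring
        rw [habs]
        exact hasDerivAt_H μ σ hσ hx0
      · exact intInt μ σ 0 (Real.exp μ)
      · exact H_tendsto_zero μ σ hσ
      · exact ((hasDerivAt_H μ σ hσ hc0).continuousAt.tendsto).mono_left nhdsWithin_le_nhds
    have h2 : ∫ u in (Real.exp μ)..1, Phi (-|μ - Real.log u| / σ)
        = ((1:ℝ) * Phi ((μ - Real.log 1)/σ)
            + Real.exp (μ + σ^2/2) * Phi ((Real.log 1 - μ - σ^2)/σ))
          - (Real.exp μ * Phi ((μ - Real.log (Real.exp μ))/σ)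
            + Real.exp (μ + σ^2/2) * Phi ((Real.log (Real.exp μ) - μ - σ^2)/σ)) := by
      apply intervalIntegral.integral_eq_sub_of_hasDerivAt_of_le
        (f := fun u => u * Phi ((μ - Real.log u)/σ)
          + Real.exp (μ + σ^2/2) * Phi ((Real.log u - μ - σ^2)/σ)) hc1.le
      · intro x hx
        exact ((hasDerivAt_G μ σ hσ (lt_of_lt_of_le hc0 hx.1)).continuousAt).continuousWithinAt
      · intro x hx
        have hx0 : 0 < x := lt_trans hc0 hx.1
        have hgt : μ < Real.log x := by
          have := Real.log_lt_log hc0 hx.1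
          rwa [hlogc] at this
        have habs : -|μ - Real.log x| / σ = (μ - Real.log x)/σ := by
          rw [abs_of_neg (by linarith : μ - Real.log x < 0)]; ring
        rw [habs]
        exact hasDerivAt_G μ σ hσ hx0
      · exact intInt μ σ (Real.exp μ) 1
    rw [h1, h2, Real.log_one, hlogc]
    have e1 : (μ - μ - σ^2)/σ = -σ := by field_simp; ring
    have e2 : (μ - (0:ℝ))/σ = μ/σ := by ring
    have e3 : ((0:ℝ) - μ - σ^2)/σ = -(μ + σ^2)/σ := by ring
    rw [e1, e2, e3]
    ring
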